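/- Let Ω ⊆ ℝ^d be a measurable set with finite positive Lebesgue measure, let μ, ρ, β > 0, and let K⁻¹ : Ω → (ℝ^d → ℝ^d) be a measurable field of linear maps satisfying K_m|y|² ≤ (K⁻¹(x)y)·y and |K⁻¹(x)y| ≤ K_M|y| for all x ∈ Ω and y ∈ ℝ^d, where 0 < K_m ≤ K_M. Define A(v)(x) = (μ/ρ)K⁻¹(x)v(x) + (β/ρ)|v(x)|v(x). Then there exists c_m > 0 such that for all v, w ∈ L³(Ω;ℝ^d), ∫_Ω (A(v) − A(w))·(v − w) dx ≥ (μ K_m/ρ) ‖v − w‖²_{L²(Ω)} + c_m ‖v − w‖³_{L³(Ω)} (note v − w ∈ L²(Ω;ℝ^d) since Ω has finite measure). -/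

import Mathlib

/-!
Pointwise, the Darcy part contributes `(μ/ρ) K_m |v - w|²` by coercivity of `K⁻¹`, and the
Forchheimer part satisfies `(|a| a - |b| b)·(a - b) = (|a| + |b|)((|a| - |b|)² + |a - b|²)/2`,
which is at least `|a - b|³/2` since `|a - b| ≤ |a| + |b|`. Integrating gives the claim once
the integrand is known to be integrable, which follows from `|K⁻¹ y| ≤ K_M |y|` and
`v, w ∈ L³`.
-/

open MeasureTheory RealInnerProductSpace

section Pointwise

variable {E : Type*} [NormedAddCommGroup E] [InnerProductSpace ℝ E]

lemma inner_norm_smul_sub_norm_smul_eq (a b : E) :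
    ⟪‖a‖ • a - ‖b‖ • b, a - b⟫ = (‖a‖ + ‖b‖) * ((‖a‖ - ‖b‖) ^ 2 + ‖a - b‖ ^ 2) / 2 := by
  rw [norm_sub_sq_real, inner_sub_left, inner_sub_right, inner_sub_right, real_inner_smul_left,
    real_inner_smul_left, real_inner_smul_left, real_inner_smul_left,
    real_inner_self_eq_norm_sq, real_inner_self_eq_norm_sq, real_inner_comm b a]
  ring

lemma norm_sub_pow_three_div_two_le_inner (a b : E) :
    ‖a - b‖ ^ 3 / 2 ≤ ⟪‖a‖ • a - ‖b‖ • b, a - b⟫ := by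
  rw [inner_norm_smul_sub_norm_smul_eq]
  calc ‖a - b‖ ^ 3 / 2 = ‖a - b‖ * ‖a - b‖ ^ 2 / 2 := by ring
    _ ≤ (‖a‖ + ‖b‖) * ((‖a‖ - ‖b‖) ^ 2 + ‖a - b‖ ^ 2) / 2 := by
      gcongr
      · exact norm_sub_le a b
      · exact le_add_of_nonneg_left (sq_nonneg _)

lemma norm_norm_smul_sub_norm_smul_le (a b : E) :
    ‖‖a‖ • a - ‖b‖ • b‖ ≤ (‖a‖ + ‖b‖) * ‖a - b‖ := by
  calc ‖‖a‖ • a - ‖b‖ • b‖ = ‖‖a‖ • (a - b) + (‖a‖ - ‖b‖) • b‖ := by congr 1; module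
    _ ≤ ‖a‖ * ‖a - b‖ + |‖a‖ - ‖b‖| * ‖b‖ := by
      grw [norm_add_le, norm_smul, norm_smul, Real.norm_eq_abs, Real.norm_eq_abs,
        abs_of_nonneg (norm_nonneg a)]
    _ ≤ ‖a‖ * ‖a - b‖ + ‖a - b‖ * ‖b‖ := by grw [abs_norm_sub_norm_le]
    _ = (‖a‖ + ‖b‖) * ‖a - b‖ := by ring

/-- The Darcy–Forchheimer operator `a ↦ α L a + γ |a| a`; in the paper `α = μ/ρ`,
`γ = β/ρ` and `L = K⁻¹(x)`. -/
def darcyForchheimer (α γ : ℝ) (L : E →ₗ[ℝ] E) (a : E) : E :=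
  α • L a + γ • (‖a‖ • a)

variable {α γ : ℝ} {L : E →ₗ[ℝ] E}

lemma inner_darcyForchheimer_sub_eq (a b : E) :
    ⟪darcyForchheimer α γ L a - darcyForchheimer α γ L b, a - b⟫ =
      α * ⟪L (a - b), a - b⟫ + γ * ⟪‖a‖ • a - ‖b‖ • b, a - b⟫ := by
  have hsub : darcyForchheimer α γ L a - darcyForchheimer α γ L b =
      α • L (a - b) + γ • (‖a‖ • a - ‖b‖ • b) := by
    simp only [darcyForchheimer, map_sub]
    module
  rw [hsub, inner_add_left, real_inner_smul_left, real_inner_smul_left]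

lemma le_inner_darcyForchheimer_sub {m : ℝ} (hα : 0 ≤ α) (hγ : 0 ≤ γ)
    (hL : ∀ y, m * ‖y‖ ^ 2 ≤ ⟪L y, y⟫) (a b : E) :
    α * m * ‖a - b‖ ^ 2 + γ / 2 * ‖a - b‖ ^ 3 ≤
      ⟪darcyForchheimer α γ L a - darcyForchheimer α γ L b, a - b⟫ := by
  rw [inner_darcyForchheimer_sub_eq]
  have hdarcy := mul_le_mul_of_nonneg_left (hL (a - b)) hα
  have hforch := mul_le_mul_of_nonneg_left (norm_sub_pow_three_div_two_le_inner a b) hγ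
  linarith

lemma abs_inner_darcyForchheimer_sub_le {M : ℝ} (hα : 0 ≤ α) (hγ : 0 ≤ γ)
    (hL : ∀ y, ‖L y‖ ≤ M * ‖y‖) (a b : E) :
    |⟪darcyForchheimer α γ L a - darcyForchheimer α γ L b, a - b⟫| ≤
      α * M * ‖a - b‖ ^ 2 + 4 * γ * (‖a‖ ^ 3 + ‖b‖ ^ 3) := by
  have hdarcy : |⟪L (a - b), a - b⟫| ≤ M * ‖a - b‖ ^ 2 :=
    calc |⟪L (a - b), a - b⟫| ≤ ‖L (a - b)‖ * ‖a - b‖ := abs_real_inner_le_norm _ _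
      _ ≤ M * ‖a - b‖ * ‖a - b‖ := by gcongr; exact hL _
      _ = M * ‖a - b‖ ^ 2 := by ring
  have hforch : |⟪‖a‖ • a - ‖b‖ • b, a - b⟫| ≤ 4 * (‖a‖ ^ 3 + ‖b‖ ^ 3) :=
    calc |⟪‖a‖ • a - ‖b‖ • b, a - b⟫| ≤ ‖‖a‖ • a - ‖b‖ • b‖ * ‖a - b‖ :=
          abs_real_inner_le_norm _ _
      _ ≤ (‖a‖ + ‖b‖) * ‖a - b‖ * (‖a‖ + ‖b‖) := by
          gcongr
          · exact norm_norm_smul_sub_norm_smul_le a b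
          · exact norm_sub_le a b
      _ ≤ (‖a‖ + ‖b‖) * (‖a‖ + ‖b‖) * (‖a‖ + ‖b‖) := by gcongr; exact norm_sub_le a b
      _ = (‖a‖ + ‖b‖) ^ 3 := by ring
      _ ≤ 2 ^ (3 - 1) * (‖a‖ ^ 3 + ‖b‖ ^ 3) := add_pow_le (norm_nonneg a) (norm_nonneg b) 3
      _ = 4 * (‖a‖ ^ 3 + ‖b‖ ^ 3) := by norm_num
  rw [inner_darcyForchheimer_sub_eq]
  calc _ ≤ |α * ⟪L (a - b), a - b⟫| + |γ * ⟪‖a‖ • a - ‖b‖ • b, a - b⟫| := abs_add_le _ _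
    _ = α * |⟪L (a - b), a - b⟫| + γ * |⟪‖a‖ • a - ‖b‖ • b, a - b⟫| := by
      rw [abs_mul, abs_mul, abs_of_nonneg hα, abs_of_nonneg hγ]
    _ ≤ α * (M * ‖a - b‖ ^ 2) + γ * (4 * (‖a‖ ^ 3 + ‖b‖ ^ 3)) := by gcongr
    _ = _ := by ring

end Pointwise

section Integral

variable {X E : Type*} [MeasurableSpace X] {ν : Measure X}

lemma AEStronglyMeasurable.linearMap_apply_of_forall {F : Type*} [NormedAddCommGroup E]
    [NormedSpace ℝ E] [FiniteDimensional ℝ E] [NormedAddCommGroup F] [NormedSpace ℝ F]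
    {L : X → E →ₗ[ℝ] F} (hL : ∀ y, AEStronglyMeasurable (fun x => L x y) ν) {u : X → E}
    (hu : AEStronglyMeasurable u ν) : AEStronglyMeasurable (fun x => L x (u x)) ν := by
  let b := Module.finBasis ℝ E
  have hexpand : (fun x => L x (u x)) = fun x => ∑ i, b.coord i (u x) • L x (b i) := by
    funext x
    conv_lhs => rw [← b.sum_repr (u x)]
    simp only [map_sum, map_smul, Module.Basis.coord_apply]
  rw [hexpand]
  refine Finset.aestronglyMeasurable_fun_sum _ fun i _ => ?_
  exact ((b.coord i).continuous_of_finiteDimensional.comp_aestronglyMeasurable hu).smul (hL _)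

variable [NormedAddCommGroup E] [InnerProductSpace ℝ E] [FiniteDimensional ℝ E]
  [IsFiniteMeasure ν] {α γ : ℝ} {L : X → E →ₗ[ℝ] E} {v w : X → E}

lemma integrable_inner_darcyForchheimer_sub {M : ℝ} (hα : 0 ≤ α) (hγ : 0 ≤ γ)
    (hLmeas : ∀ y, AEStronglyMeasurable (fun x => L x y) ν)
    (hLbdd : ∀ᵐ x ∂ν, ∀ y, ‖L x y‖ ≤ M * ‖y‖) (hv : MemLp v 3 ν) (hw : MemLp w 3 ν) :
    Integrable (fun x =>
      ⟪darcyForchheimer α γ (L x) (v x) - darcyForchheimer α γ (L x) (w x), v x - w x⟫) ν := by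
  have hvm := hv.aestronglyMeasurable
  have hwm := hw.aestronglyMeasurable
  have hdom : Integrable (fun x =>
      α * M * ‖v x - w x‖ ^ 2 + 4 * γ * (‖v x‖ ^ 3 + ‖w x‖ ^ 3)) ν := by
    have h2 : Integrable (fun x => ‖v x - w x‖ ^ 2) ν :=
      ((hv.sub hw).mono_exponent (by norm_num)).integrable_norm_pow'
    exact (h2.const_mul _).add ((hv.integrable_norm_pow'.add hw.integrable_norm_pow').const_mul _)
  refine hdom.mono' ?_ ?_
  · simp only [inner_darcyForchheimer_sub_eq]
    have hu := hvm.sub hwm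
    have hLu := AEStronglyMeasurable.linearMap_apply_of_forall hLmeas hu
    exact ((hLu.inner hu).const_mul α).add
      ((((hvm.norm.smul hvm).sub (hwm.norm.smul hwm)).inner hu).const_mul γ)
  · filter_upwards [hLbdd] with x hx
    exact abs_inner_darcyForchheimer_sub_le hα hγ hx _ _

lemma integral_inner_darcyForchheimer_sub_ge {m M : ℝ} (hα : 0 ≤ α) (hγ : 0 ≤ γ)
    (hLmeas : ∀ y, AEStronglyMeasurable (fun x => L x y) ν)
    (hLcoer : ∀ᵐ x ∂ν, ∀ y, m * ‖y‖ ^ 2 ≤ ⟪L x y, y⟫)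
    (hLbdd : ∀ᵐ x ∂ν, ∀ y, ‖L x y‖ ≤ M * ‖y‖) (hv : MemLp v 3 ν) (hw : MemLp w 3 ν) :
    α * m * ∫ x, ‖v x - w x‖ ^ 2 ∂ν + γ / 2 * ∫ x, ‖v x - w x‖ ^ 3 ∂ν ≤
      ∫ x, ⟪darcyForchheimer α γ (L x) (v x) - darcyForchheimer α γ (L x) (w x), v x - w x⟫ ∂ν := by
  have h2 : Integrable (fun x => ‖v x - w x‖ ^ 2) ν :=
    ((hv.sub hw).mono_exponent (by norm_num)).integrable_norm_pow'
  have h3 : Integrable (fun x => ‖v x - w x‖ ^ 3) ν := (hv.sub hw).integrable_norm_pow'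
  rw [← integral_const_mul, ← integral_const_mul, ← integral_add (h2.const_mul _) (h3.const_mul _)]
  refine integral_mono_ae ((h2.const_mul _).add (h3.const_mul _))
    (integrable_inner_darcyForchheimer_sub hα hγ hLmeas hLbdd hv hw) ?_
  filter_upwards [hLcoer] with x hx
  exact le_inner_darcyForchheimer_sub hα hγ hx _ _

end Integral

theorem stmt_3_general (d : ℕ) (Ω : Set (EuclideanSpace ℝ (Fin d)))
    (hΩ : MeasurableSet Ω) (hΩpos : 0 < volume Ω) (hΩfin : volume Ω < ⊤)
    (μ ρ β Km KM : ℝ) (hμ : 0 < μ) (hρ : 0 < ρ) (hβ : 0 < β)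
    (hKm : 0 < Km)
    (Kinv : EuclideanSpace ℝ (Fin d) → EuclideanSpace ℝ (Fin d) →ₗ[ℝ] EuclideanSpace ℝ (Fin d))
    (hKmeas : ∀ y, Measurable fun x => Kinv x y)
    (hKlow : ∀ x ∈ Ω, ∀ y, Km * ‖y‖ ^ 2 ≤ (inner ℝ (Kinv x y) y : ℝ))
    (hKup : ∀ x ∈ Ω, ∀ y, ‖Kinv x y‖ ≤ KM * ‖y‖)
    (A : (EuclideanSpace ℝ (Fin d) → EuclideanSpace ℝ (Fin d)) →
          EuclideanSpace ℝ (Fin d) → EuclideanSpace ℝ (Fin d))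
    (hA : ∀ v x, A v x = (μ / ρ) • Kinv x (v x) + (β / ρ) • (‖v x‖ • v x)) :
    ∃ cm : ℝ, 0 < cm ∧
      ∀ v w : EuclideanSpace ℝ (Fin d) → EuclideanSpace ℝ (Fin d),
        MemLp v 3 (volume.restrict Ω) → MemLp w 3 (volume.restrict Ω) →
        μ * Km / ρ * ∫ x in Ω, ‖v x - w x‖ ^ 2 + cm * ∫ x in Ω, ‖v x - w x‖ ^ 3 ≤
          ∫ x in Ω, (inner ℝ (A v x - A w x) (v x - w x) : ℝ) := by
  have hΩreal : 0 < volume.real Ω := ENNReal.toReal_pos hΩpos.ne' hΩfin.ne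
  -- The first integral extends over the constant `cm * ∫ ‖v - w‖ ^ 3`, which picks up a factor `|Ω|`.
  refine ⟨β / (2 * μ * Km * volume.real Ω), by positivity, fun v w hv hw => ?_⟩
  have : IsFiniteMeasure (volume.restrict Ω) := isFiniteMeasure_restrict.2 hΩfin.ne
  have h2 : Integrable (fun x => ‖v x - w x‖ ^ 2) (volume.restrict Ω) :=
    ((hv.sub hw).mono_exponent (by norm_num)).integrable_norm_pow'
  have hmono := integral_inner_darcyForchheimer_sub_ge (α := μ / ρ) (γ := β / ρ) (by positivity)
    (by positivity) (fun y => (hKmeas y).aestronglyMeasurable) (ae_restrict_of_forall_mem hΩ hKlow)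
    (ae_restrict_of_forall_mem hΩ hKup) hv hw
  have hA_eq : ∀ u x, A u x = darcyForchheimer (μ / ρ) (β / ρ) (Kinv x) (u x) := hA
  simp_rw [hA_eq]
  rw [integral_add h2 (integrable_const _), setIntegral_const, smul_eq_mul]
  calc _ = (μ / ρ * Km * ∫ x in Ω, ‖v x - w x‖ ^ 2) + β / ρ / 2 * ∫ x in Ω, ‖v x - w x‖ ^ 3 := by
        field_simp
    _ ≤ _ := hmono

/-- Strict monotonicity of the full Darcy–Forchheimer operator
`A(v) = (μ/ρ) K⁻¹ v + (β/ρ) |v| v`, combining both parts of Property 2.1. -/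
theorem stmt_3 (d : ℕ) (Ω : Set (EuclideanSpace ℝ (Fin d)))
    (hΩ : MeasurableSet Ω) (hΩpos : 0 < volume Ω) (hΩfin : volume Ω < ⊤)
    (μ ρ β Km KM : ℝ) (hμ : 0 < μ) (hρ : 0 < ρ) (hβ : 0 < β)
    (hKm : 0 < Km) (hKmM : Km ≤ KM)
    (Kinv : EuclideanSpace ℝ (Fin d) → EuclideanSpace ℝ (Fin d) →ₗ[ℝ] EuclideanSpace ℝ (Fin d))
    (hKmeas : ∀ y, Measurable fun x => Kinv x y)
    (hKlow : ∀ x ∈ Ω, ∀ y, Km * ‖y‖ ^ 2 ≤ (inner ℝ (Kinv x y) y : ℝ))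
    (hKup : ∀ x ∈ Ω, ∀ y, ‖Kinv x y‖ ≤ KM * ‖y‖)
    (A : (EuclideanSpace ℝ (Fin d) → EuclideanSpace ℝ (Fin d)) →
          EuclideanSpace ℝ (Fin d) → EuclideanSpace ℝ (Fin d))
    (hA : ∀ v x, A v x = (μ / ρ) • Kinv x (v x) + (β / ρ) • (‖v x‖ • v x)) :
    ∃ cm : ℝ, 0 < cm ∧
      ∀ v w : EuclideanSpace ℝ (Fin d) → EuclideanSpace ℝ (Fin d),
        MemLp v 3 (volume.restrict Ω) → MemLp w 3 (volume.restrict Ω) →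
        μ * Km / ρ * ∫ x in Ω, ‖v x - w x‖ ^ 2 + cm * ∫ x in Ω, ‖v x - w x‖ ^ 3 ≤
          ∫ x in Ω, (inner ℝ (A v x - A w x) (v x - w x) : ℝ) :=
  stmt_3_general d Ω hΩ hΩpos hΩfin μ ρ β Km KM hμ hρ hβ hKm Kinv hKmeas hKlow hKup A hA
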